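/- Every nonempty oriented graph derived from a Burling tree contains a source, i.e., a vertex with no incoming arcs. -/
import Mathlib


/-- An oriented graph on vertex type `V`: an irreflexive, asymmetric arc relation. -/
structure OrientedGraph (V : Type) where
  arc : V → V → Prop
  irrefl : ∀ v, ¬ arc v v
  asymm : ∀ u v, arc u v → ¬ arc v u

/-- A Burling tree `(T, root, lastBorn, choose)`.  The tree is encoded by its parent
function (with `parent root = root`); `lastBorn v` is a distinguished child of each
non-leaf `v`; `choose v` is the vertex set of a (possibly empty) branch of the tree
starting at the last-born of the parent of `v` when `v` is neither the root nor a
last-born, and is empty otherwise. -/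
structure BurlingTree (V : Type) where
  root : V
  parent : V → V
  parent_root : parent root = root
  reaches_root : ∀ v, ∃ n, parent^[n] v = root
  lastBorn : V → V
  lastBorn_child : ∀ v w, w ≠ root → parent w = v →
    lastBorn v ≠ root ∧ parent (lastBorn v) = v
  choose : V → Set V
  choose_root : choose root = ∅
  choose_lastBorn : ∀ v, v ≠ root → lastBorn (parent v) = v → choose v = ∅
  choose_branch : ∀ v, v ≠ root → lastBorn (parent v) ≠ v →
    choose v = ∅ ∨ ∃ b, (∃ n, parent^[n] b = lastBorn (parent v)) ∧
      choose v = {x | (∃ n, parent^[n] x = lastBorn (parent v)) ∧ ∃ n, parent^[n] b = x}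

namespace BurlingTree

variable {V : Type} (T : BurlingTree V)

/-- `u` is an ancestor of `v` in `T` (possibly `u = v`). -/
def Anc (u v : V) : Prop := ∃ n, T.parent^[n] v = u

/-- Arc relation of the oriented graph derived from `T` with vertex set `S`
(the induced subgraph, on `S`, of the graph fully derived from `T`). -/
def Arc (S : Set V) (u v : V) : Prop := u ∈ S ∧ v ∈ S ∧ v ∈ T.choose u

/-- Underlying undirected graph of the derived graph on `S`. -/
def UGraph (S : Set V) : SimpleGraph V := SimpleGraph.fromRel (T.Arc S)

/-- Closed in-neighborhood `N⁻[v]` in the derived graph on `S`. -/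
def InNbhd (S : Set V) (v : V) : Set V := insert v {u | T.Arc S u v}

/-- The top-set of the derived graph on `S`: vertices of `S` that are the unique
vertex of `S` on the branch of `T` from the root to them. -/
def TopSet (S : Set V) : Set V := {v | v ∈ S ∧ ∀ x ∈ S, T.Anc x v → x = v}

end BurlingTree

/-- Reachability between `u` and `w` inside the set `A` of vertices of `G`. -/
def ReachIn {V : Type} (G : SimpleGraph V) (A : Set V) (u w : V) : Prop :=
  Relation.ReflTransGen (fun x y => x ∈ A ∧ y ∈ A ∧ G.Adj x y) u w

/-- `N⁻[v]` is a full in-star cutset of the graph derived from `T` on `S`. -/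
def BurlingTree.IsFullInStarCutset {V : Type} (T : BurlingTree V) (S : Set V) (v : V) : Prop :=
  ∃ a ∈ S \ T.InNbhd S v, ∃ b ∈ S \ T.InNbhd S v,
    ¬ ReachIn (T.UGraph S) (S \ T.InNbhd S v) a b

/-- The arc relation `A` is an in-forest: a disjoint union of orientations of rooted
trees with all edges oriented towards the root.  Equivalently: it is irreflexive and
asymmetric, its underlying graph is a forest, every vertex has at most one
out-neighbor, and from every vertex the unique outgoing directed path terminates in
a sink. -/
def IsInForestRel {V : Type} (A : V → V → Prop) : Prop :=
  (∀ v, ¬ A v v) ∧ (∀ u v, A u v → ¬ A v u) ∧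
  (SimpleGraph.fromRel A).IsAcyclic ∧
  (∀ u v w, A u v → A u w → v = w) ∧
  (∀ v, ∃ r, Relation.ReflTransGen A v r ∧ ∀ w, ¬ A r w)

/-- The arc relation `A` forms an in-tree on the vertex set `U`:
an in-forest all of whose vertices in `U` reach a common root. -/
def IsInTreeOn {V : Type} (A : V → V → Prop) (U : Set V) : Prop :=
  IsInForestRel A ∧ ∃ r ∈ U, ∀ v ∈ U, Relation.ReflTransGen A v r

/-- The graph with arc relation `A` and vertex set `U` is an oriented chandelier:
it is obtained from an in-tree `G'` (on `U` minus an apex `v`) with at least two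
leaves by adding the vertex `v` and exactly the arcs from each leaf of `G'` to `v`.
A leaf of the in-tree is a source having exactly one out-neighbor. -/
def ChandelierOn {V : Type} (A : V → V → Prop) (U : Set V) : Prop :=
  ∃ v ∈ U,
    IsInTreeOn (fun a b => A a b ∧ a ≠ v ∧ b ≠ v) (U \ {v}) ∧
    (∀ u, ¬ A v u) ∧
    (∀ u, A u v ↔ (u ∈ U ∧ u ≠ v ∧ (∀ w, ¬ (A w u ∧ w ≠ v ∧ u ≠ v)) ∧
       ∃ w, A u w ∧ w ≠ v ∧ u ≠ v)) ∧
    (∃ u₁ u₂, u₁ ≠ u₂ ∧ A u₁ v ∧ A u₂ v)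

namespace OrientedGraph

variable {V : Type} (G : OrientedGraph V)

/-- Underlying undirected simple graph of an oriented graph. -/
def toSimpleGraph : SimpleGraph V := SimpleGraph.fromRel G.arc

/-- `G` is an in-forest. -/
def IsInForest : Prop := IsInForestRel G.arc

/-- `G` is an oriented chandelier. -/
def IsChandelier : Prop := ChandelierOn G.arc Set.univ

/-- Closed in-neighborhood `N⁻[v]`. -/
def InNbhd (v : V) : Set V := insert v {u | G.arc u v}

/-- `G` has a full in-star cutset: for some vertex `v`, removing `N⁻[v]`
disconnects the underlying graph. -/
def HasFullInStarCutset : Prop :=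
  ∃ v, ∃ a ∈ (G.InNbhd v)ᶜ, ∃ b ∈ (G.InNbhd v)ᶜ,
    ¬ ReachIn G.toSimpleGraph (G.InNbhd v)ᶜ a b

/-- `v` is a cut vertex of `G`: some two vertices distinct from `v` are connected
in the underlying graph but disconnected after removing `v`. -/
def IsCutVertex (v : V) : Prop :=
  ∃ a b, a ≠ v ∧ b ≠ v ∧ G.toSimpleGraph.Reachable a b ∧
    ¬ ReachIn G.toSimpleGraph {v}ᶜ a b

/-- `G` is a `k`-Burling oriented graph: it is isomorphic to a graph derived from a
Burling tree `T` such that every branch of `T` contains at most `k` vertices of `G`. -/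
def IsKBurling (k : ℕ) : Prop :=
  ∃ (W : Type) (T : BurlingTree W) (f : V → W),
    Function.Injective f ∧
    (∀ u v, G.arc u v ↔ T.Arc (Set.range f) (f u) (f v)) ∧
    ∀ b : W, ({x | x ∈ Set.range f ∧ T.Anc x b}).ncard ≤ k

end OrientedGraph

/-- The graph with arc relation `A` on vertex set `U` is (isomorphic to) a graph
derived from some Burling tree. -/
def IsDerivedOn {V : Type} (A : V → V → Prop) (U : Set V) : Prop :=
  ∃ (W : Type) (T : BurlingTree W) (f : V → W),
    Set.InjOn f U ∧ ∀ a ∈ U, ∀ b ∈ U, (A a b ↔ f b ∈ T.choose (f a))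

/-- `C` is a hole of the graph derived from `T` on `S`: an induced cycle of length
at least 4 of the underlying graph (a finite set of at least four vertices whose
induced subgraph is connected and 2-regular). -/
def BurlingTree.IsHole {V : Type} (T : BurlingTree V) (S : Set V) (C : Set V) : Prop :=
  C ⊆ S ∧ C.Finite ∧ 4 ≤ C.ncard ∧
  (∀ x ∈ C, ({y | y ∈ C ∧ (T.UGraph S).Adj x y}).ncard = 2) ∧
  (∀ x ∈ C, ∀ y ∈ C, ReachIn (T.UGraph S) C x y)

/-- `p` is the pivot of the hole `C`: a sink of the hole both of whose neighbors in
the hole are sources of the hole (the antennas). -/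
def BurlingTree.IsPivotOf {V : Type} (T : BurlingTree V) (S : Set V) (C : Set V) (p : V) : Prop :=
  p ∈ C ∧ (∀ w ∈ C, ¬ T.Arc S p w) ∧
  (∀ q ∈ C, (T.UGraph S).Adj p q → ∀ w ∈ C, ¬ T.Arc S w q)

namespace BurlingTree

variable {V : Type} (T : BurlingTree V)

/-- Depth of a vertex: least number of parent steps to reach the root. -/
noncomputable def depth (v : V) : ℕ := sInf {n | T.parent^[n] v = T.root}

lemma depth_spec (v : V) : T.parent^[T.depth v] v = T.root :=
  Nat.sInf_mem (T.reaches_root v)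

lemma depth_parent {w : V} (hw : w ≠ T.root) :
    T.depth w = T.depth (T.parent w) + 1 := by
  have h1 : T.parent^[T.depth (T.parent w) + 1] w = T.root := by
    rw [Function.iterate_succ_apply]; exact T.depth_spec _
  have hle : T.depth w ≤ T.depth (T.parent w) + 1 := Nat.sInf_le h1
  have hpos : 0 < T.depth w := by
    rcases Nat.eq_zero_or_pos (T.depth w) with h | h
    · exfalso; apply hw; have := T.depth_spec w; rwa [h] at this
    · exact h
  have h2 : T.parent^[T.depth w - 1] (T.parent w) = T.root := by
    have h := T.depth_spec w
    rw [show T.depth w = (T.depth w - 1) + 1 by omega,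
      Function.iterate_succ_apply] at h
    exact h
  have : T.depth (T.parent w) ≤ T.depth w - 1 := Nat.sInf_le h2
  omega

lemma depth_iter {L : V} (hL : L ≠ T.root) :
    ∀ (n : ℕ) (x : V), T.parent^[n] x = L → T.depth x = T.depth L + n := by
  intro n
  induction n with
  | zero => intro x hx; simp only [Function.iterate_zero, id_eq] at hx; simp [hx]
  | succ n ih =>
    intro x hx
    have hxr : x ≠ T.root := by
      rintro rfl
      rw [Function.iterate_fixed T.parent_root] at hx
      exact hL hx.symm
    rw [Function.iterate_succ_apply] at hx
    have := ih (T.parent x) hx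
    rw [T.depth_parent hxr, this]
    omega

lemma mem_choose {u v : V} (h : v ∈ T.choose u) :
    u ≠ T.root ∧ T.lastBorn (T.parent u) ≠ u ∧
      ∃ n, T.parent^[n] v = T.lastBorn (T.parent u) := by
  have hu : u ≠ T.root := by
    rintro rfl; rw [T.choose_root] at h; exact h
  have hlb : T.lastBorn (T.parent u) ≠ u := by
    intro he; rw [T.choose_lastBorn u hu he] at h; exact h
  refine ⟨hu, hlb, ?_⟩
  rcases T.choose_branch u hu hlb with h0 | ⟨b, _, hc⟩
  · rw [h0] at h; exact h.elim
  · rw [hc] at h; exact h.1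

end BurlingTree

/-- Every nonempty oriented graph derived from a Burling tree contains
a source, i.e. a vertex with no incoming arcs. -/
theorem stmt2 (V : Type) (T : BurlingTree V) (S : Set V) (hS : S.Nonempty) :
    ∃ v ∈ S, ∀ u, ¬ T.Arc S u v := by
  classical
  obtain ⟨v₀, hv₀S, hv₀d⟩ : ∃ v ∈ S, T.depth v = sInf (T.depth '' S) := by
    rcases Nat.sInf_mem (hS.image T.depth) with ⟨v, hv, hvd⟩
    exact ⟨v, hv, hvd⟩
  have hmin : ∀ u ∈ S, T.depth v₀ ≤ T.depth u := by
    intro u hu; rw [hv₀d]; exact Nat.sInf_le ⟨u, hu, rfl⟩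
  -- key: a vertex of minimal depth receiving an arc from `y` must be the
  -- last-born of the parent of `y`.
  have key : ∀ x, ∀ y, T.Arc S y x → T.depth x = T.depth v₀ →
      T.lastBorn (T.parent y) = x ∧ T.parent x = T.parent y ∧
        T.depth y = T.depth v₀ := by
    rintro x y ⟨hyS, hxS, hxc⟩ hxd
    obtain ⟨hy, hlb, n, hn⟩ := T.mem_choose hxc
    obtain ⟨hLroot, hLpar⟩ := T.lastBorn_child (T.parent y) y hy rfl
    have hdy : T.depth y = T.depth (T.parent y) + 1 := T.depth_parent hy
    have hdL : T.depth (T.lastBorn (T.parent y)) = T.depth (T.parent y) + 1 := by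
      rw [T.depth_parent hLroot, hLpar]
    have hdx : T.depth x = T.depth (T.lastBorn (T.parent y)) + n :=
      T.depth_iter hLroot n x hn
    have hylow : T.depth v₀ ≤ T.depth y := hmin y hyS
    have hn0 : n = 0 := by omega
    subst hn0
    simp only [Function.iterate_zero, id_eq] at hn
    subst hn
    exact ⟨rfl, hLpar, by omega⟩
  by_cases hsrc : ∀ u, ¬ T.Arc S u v₀
  · exact ⟨v₀, hv₀S, hsrc⟩
  · push_neg at hsrc
    obtain ⟨u, harc⟩ := hsrc
    have huS := harc.1
    have hvc := harc.2.2
    obtain ⟨hlbu, hparu, hdu⟩ := key v₀ u harc rfl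
    obtain ⟨_, hlbne, _⟩ := T.mem_choose hvc
    refine ⟨u, huS, fun w hw => ?_⟩
    obtain ⟨hlbw, hparw, _⟩ := key u w hw hdu
    apply hlbne
    rw [hparw]
    exact hlbw
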